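/- Let X be a metric space and let f, g : [0,1] → X be continuous curves. Let 0 = s_0 ≤ s_1 ≤ … ≤ s_p = 1 and 0 = t_0 ≤ t_1 ≤ … ≤ t_q = 1, set u_i = f(s_i) and v_j = g(t_j), and suppose the subdivisions have deviation at most η ≥ 0, i.e. for every i and every s ∈ [s_i, s_{i+1}], dist(f(s), f(s_i)) ≤ η and dist(f(s), f(s_{i+1})) ≤ η, and likewise for g on each [t_j, t_{j+1}]. Then δ_F(f, g) ≤ δ_dF(u, v) + 2η. -/

import Mathlib

open unitInterval

/-- A reparametrization: a continuous nondecreasing surjection of `[0,1]` onto itself. -/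
def IsReparam (α : I → I) : Prop :=
  Continuous α ∧ Monotone α ∧ Function.Surjective α

/-- The continuous Fréchet distance between two curves `f, g : [0,1] → X`:
the infimum over all pairs of reparametrizations `(α, β)` of
`sup_{r ∈ [0,1]} dist (f (α r)) (g (β r))`. -/
noncomputable def frechetDist {X : Type*} [MetricSpace X] (f g : I → X) : ℝ :=
  sInf { d | ∃ α β : I → I, IsReparam α ∧ IsReparam β ∧
    d = ⨆ r : I, dist (f (α r)) (g (β r)) }

/-- `IsCoupling p q m a b`: the index pairs `(a 0, b 0), …, (a m, b m)` form a coupling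
between sequences indexed by `0,…,p` and `0,…,q`. -/
def IsCoupling (p q m : ℕ) (a b : ℕ → ℕ) : Prop :=
  a 0 = 0 ∧ b 0 = 0 ∧ a m = p ∧ b m = q ∧
  (∀ l < m, a (l + 1) = a l ∨ a (l + 1) = a l + 1) ∧
  (∀ l < m, b (l + 1) = b l ∨ b (l + 1) = b l + 1)

/-- The discrete Fréchet distance between the finite sequences `u 0, …, u p` and
`v 0, …, v q`, computed with respect to the distance function `d`: the infimum over all
couplings of the maximum of `d` over the coupled pairs. -/
noncomputable def discreteFrechetWith {X : Type*} (d : X → X → ℝ)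
    (p q : ℕ) (u v : ℕ → X) : ℝ :=
  sInf { c | ∃ m : ℕ, ∃ a b : ℕ → ℕ, IsCoupling p q m a b ∧
    c = (Finset.range (m + 1)).sup' ⟨0, Finset.mem_range.mpr (Nat.succ_pos m)⟩
      (fun l => d (u (a l)) (v (b l))) }

/-- The discrete Fréchet distance with respect to the metric of `X`. -/
noncomputable def discreteFrechet {X : Type*} [MetricSpace X]
    (p q : ℕ) (u v : ℕ → X) : ℝ :=
  discreteFrechetWith dist p q u v

/-!
Fix a coupling `(a_l, b_l)_{l ≤ m}`. Running `[0,1]` through `m` equal slots, on the `l`-th slot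
let `f` travel (piecewise linearly in the parameter) from `s (a l)` to `s (a (l+1))` and `g` from
`t (b l)` to `t (b (l+1))`. Each of these is either a single vertex or one edge of the subdivision,
so during slot `l` the moving points stay within `η` of `u (a l)` and `v (b l)`, and the triangle
inequality bounds their distance by `dist (u (a l)) (v (b l)) + 2η`.
-/

open Finset

/-- The `k`-th summand ramps linearly from `0` to `S (k + 1) - S k` on `[k, k + 1]`, so this is the
piecewise linear interpolation of `S` on `[0, m]`. -/
noncomputable def piecewiseLinear (S : ℕ → ℝ) (m : ℕ) (x : ℝ) : ℝ :=
  S 0 + ∑ k ∈ range m, (S (k + 1) - S k) * (Set.projIcc 0 1 zero_le_one (x - k) : ℝ)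

theorem monotone_piecewiseLinear {S : ℕ → ℝ} {m : ℕ} (hS : ∀ k < m, S k ≤ S (k + 1)) :
    Monotone (piecewiseLinear S m) := fun _ _ hxy =>
  add_le_add_right (sum_le_sum fun k hk => mul_le_mul_of_nonneg_left
    (Subtype.mono_coe _ (Set.monotone_projIcc _ (sub_le_sub_right hxy _)))
    (sub_nonneg.2 (hS k (mem_range.1 hk)))) _

theorem continuous_piecewiseLinear (S : ℕ → ℝ) (m : ℕ) : Continuous (piecewiseLinear S m) := by
  unfold piecewiseLinear
  fun_prop

theorem piecewiseLinear_natCast (S : ℕ → ℝ) {m l : ℕ} (hl : l ≤ m) :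
    piecewiseLinear S m l = S l := by
  have full : ∀ k ∈ range l,
      (S (k + 1) - S k) * (Set.projIcc 0 1 zero_le_one ((l : ℝ) - k) : ℝ) = S (k + 1) - S k := by
    intro k hk
    have : (k : ℝ) + 1 ≤ l := by exact_mod_cast mem_range.1 hk
    rw [Set.projIcc_of_right_le _ (by linarith), mul_one]
  have empty : ∀ k ∈ Ico l m,
      (S (k + 1) - S k) * (Set.projIcc 0 1 zero_le_one ((l : ℝ) - k) : ℝ) = 0 := by
    intro k hk
    have : (l : ℝ) ≤ k := by exact_mod_cast (mem_Ico.1 hk).1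
    rw [Set.projIcc_of_le_left _ (by linarith), mul_zero]
  rw [piecewiseLinear, ← sum_range_add_sum_Ico _ hl, sum_congr rfl full, sum_congr rfl empty,
    sum_const_zero, sum_range_sub]
  ring

theorem exists_isReparam_mem_Icc {m : ℕ} (S : ℕ → I) (hS : ∀ k < m, S k ≤ S (k + 1))
    (h0 : S 0 = 0) (hm : S m = 1) :
    ∃ α : I → I, IsReparam α ∧ ∀ l < m, ∀ r : I, (l : ℝ) ≤ m * r → (m : ℝ) * r ≤ l + 1 →
      α r ∈ Set.Icc (S l) (S (l + 1)) := by
  set ψ : ℝ → ℝ := fun x => piecewiseLinear (fun k => S k) m (m * x)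
  have hψ_mono : Monotone ψ := (monotone_piecewiseLinear hS).comp
    (monotone_mul_left_of_nonneg m.cast_nonneg)
  have hψ_nat : ∀ l ≤ m, piecewiseLinear (fun k => S k) m l = S l :=
    fun l hl => piecewiseLinear_natCast _ hl
  have hψ0 : ψ 0 = 0 := by simpa [ψ, h0] using hψ_nat 0 m.zero_le
  have hψ1 : ψ 1 = 1 := by simpa [ψ, hm] using hψ_nat m le_rfl
  have hψ_mem (r : I) : ψ r ∈ I :=
    ⟨hψ0 ▸ hψ_mono r.2.1, hψ1 ▸ hψ_mono r.2.2⟩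
  set α : I → I := fun r => ⟨ψ r, hψ_mem r⟩
  have hα_cont : Continuous α := Continuous.subtype_mk
    ((continuous_piecewiseLinear _ _).comp (continuous_const.mul continuous_subtype_val)) _
  have hα0 : α 0 = 0 := Subtype.ext hψ0
  have hα1 : α 1 = 1 := Subtype.ext hψ1
  refine ⟨α, ⟨hα_cont, fun _ _ h => hψ_mono (Subtype.mono_coe _ h), fun y => ?_⟩, ?_⟩
  · exact intermediate_value_univ 0 1 hα_cont (by rw [hα0, hα1]; exact ⟨nonneg', le_one'⟩)
  · intro l hl r h1 h2
    constructor
    · show (S l : ℝ) ≤ ψ r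
      rw [← hψ_nat l hl.le]
      exact monotone_piecewiseLinear hS h1
    · show ψ r ≤ (S (l + 1) : ℝ)
      rw [← hψ_nat (l + 1) hl]
      exact monotone_piecewiseLinear hS (by push_cast; exact h2)

theorem dist_le_of_mem_Icc_step {α X : Type*} [PartialOrder α] [PseudoMetricSpace X]
    {f : α → X} {s : ℕ → α} {p : ℕ} {η : ℝ} (hη : 0 ≤ η)
    (hdev : ∀ i < p, ∀ x, s i ≤ x → x ≤ s (i + 1) → dist (f x) (f (s i)) ≤ η)
    {i j : ℕ} (hij : j = i ∨ j = i + 1) (hj : j ≤ p) {x : α} (hx : x ∈ Set.Icc (s i) (s j)) :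
    dist (f x) (f (s i)) ≤ η := by
  obtain rfl | rfl := hij
  · rw [le_antisymm hx.2 hx.1, dist_self]
    exact hη
  · exact hdev i hj x hx.1 hx.2

theorem exists_isReparam_dist_le {X : Type*} [PseudoMetricSpace X] (f : I → X) {p m : ℕ}
    {s : ℕ → I} {a : ℕ → ℕ} (hs0 : s 0 = 0) (hsp : s p = 1) (hs : ∀ i < p, s i ≤ s (i + 1))
    {η : ℝ} (hη : 0 ≤ η)
    (hdev : ∀ i < p, ∀ x : I, s i ≤ x → x ≤ s (i + 1) → dist (f x) (f (s i)) ≤ η)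
    (ha0 : a 0 = 0) (ham : a m = p) (ha : ∀ l < m, a (l + 1) = a l ∨ a (l + 1) = a l + 1) :
    ∃ α : I → I, IsReparam α ∧ ∀ l < m, ∀ r : I, (l : ℝ) ≤ m * r → (m : ℝ) * r ≤ l + 1 →
      dist (f (α r)) (f (s (a l))) ≤ η := by
  have ha_mono : MonotoneOn a (Set.Iic m) :=
    monotoneOn_of_le_succ Set.ordConnected_Iic fun l _ _ hl => by
      have : l < m := Order.succ_le_iff.1 hl
      rcases ha l this with h | h <;> simp [h]
  have ha_le (l : ℕ) (hl : l ≤ m) : a l ≤ p := ham ▸ ha_mono hl Set.self_mem_Iic hl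
  have hsa (l : ℕ) (hl : l < m) : s (a l) ≤ s (a (l + 1)) := by
    rcases ha l hl with h | h
    · rw [h]
    · rw [h]
      exact hs _ (by have := ha_le (l + 1) hl; omega)
  obtain ⟨α, hα, hα_mem⟩ :=
    exists_isReparam_mem_Icc (fun l => s (a l)) hsa (by simp [ha0, hs0]) (by simp [ham, hsp])
  exact ⟨α, hα, fun l hl r h1 h2 =>
    dist_le_of_mem_Icc_step hη hdev (ha l hl) (ha_le _ hl) (hα_mem l hl r h1 h2)⟩

theorem exists_lt_natCast_le_le_add_one {m : ℕ} (hm : 0 < m) {x : ℝ} (h0 : 0 ≤ x)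
    (hx : x ≤ m) : ∃ l < m, (l : ℝ) ≤ x ∧ x ≤ l + 1 := by
  rcases hx.lt_or_eq with hx | rfl
  · exact ⟨⌊x⌋₊, (Nat.floor_lt h0).2 hx, Nat.floor_le h0, (Nat.lt_floor_add_one x).le⟩
  · refine ⟨m - 1, by omega, ?_, ?_⟩ <;> rw [Nat.cast_pred hm] <;> linarith

theorem frechetDist_le_iSup {X : Type*} [MetricSpace X] (f g : I → X) {α β : I → I}
    (hα : IsReparam α) (hβ : IsReparam β) :
    frechetDist f g ≤ ⨆ r, dist (f (α r)) (g (β r)) :=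
  csInf_le ⟨0, by rintro d ⟨α', β', -, -, rfl⟩; exact Real.iSup_nonneg fun _ => dist_nonneg⟩
    ⟨α, β, hα, hβ, rfl⟩

theorem isCoupling_staircase (p q : ℕ) :
    IsCoupling p q (p + q) (fun l => min l p) (fun l => l - min l p) := by
  refine ⟨?_, ?_, ?_, ?_, fun l _ => ?_, fun l _ => ?_⟩ <;> dsimp only <;> omega

theorem IsCoupling.frechetDist_le {X : Type*} [MetricSpace X] {f g : I → X} {p q m : ℕ}
    {a b : ℕ → ℕ} (hc : IsCoupling p q m a b) {s t : ℕ → I}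
    (hs0 : s 0 = 0) (hsp : s p = 1) (hs : ∀ i < p, s i ≤ s (i + 1))
    (ht0 : t 0 = 0) (htq : t q = 1) (ht : ∀ j < q, t j ≤ t (j + 1)) {η : ℝ} (hη : 0 ≤ η)
    (hdevf : ∀ i < p, ∀ x : I, s i ≤ x → x ≤ s (i + 1) → dist (f x) (f (s i)) ≤ η)
    (hdevg : ∀ j < q, ∀ x : I, t j ≤ x → x ≤ t (j + 1) → dist (g x) (g (t j)) ≤ η) :
    frechetDist f g ≤ (range (m + 1)).sup' nonempty_range_add_one
      (fun l => dist (f (s (a l))) (g (t (b l)))) + 2 * η := by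
  obtain ⟨ha0, hb0, ham, hbm, ha, hb⟩ := hc
  have hm : 0 < m := by
    refine Nat.pos_of_ne_zero fun hm => zero_ne_one (α := I) ?_
    rw [← hs0, ← hsp, ← ham, hm, ha0]
  obtain ⟨α, hα, hfα⟩ := exists_isReparam_dist_le f hs0 hsp hs hη hdevf ha0 ham ha
  obtain ⟨β, hβ, hgβ⟩ := exists_isReparam_dist_le g ht0 htq ht hη hdevg hb0 hbm hb
  refine (frechetDist_le_iSup f g hα hβ).trans (ciSup_le fun r => ?_)
  obtain ⟨l, hl, h1, h2⟩ := exists_lt_natCast_le_le_add_one hm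
    (mul_nonneg m.cast_nonneg nonneg') (mul_le_of_le_one_right m.cast_nonneg le_one')
  have hvertex : dist (f (s (a l))) (g (t (b l))) ≤ (range (m + 1)).sup' nonempty_range_add_one
      (fun l => dist (f (s (a l))) (g (t (b l)))) :=
    le_sup' (fun l => dist (f (s (a l))) (g (t (b l)))) (mem_range.2 (by omega))
  calc dist (f (α r)) (g (β r))
      ≤ dist (f (α r)) (f (s (a l))) + dist (f (s (a l))) (g (t (b l)))
        + dist (g (β r)) (g (t (b l))) := by
        rw [dist_comm (g (β r))]
        exact dist_triangle4 _ _ _ _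
    _ ≤ _ := by linarith [hfα l hl r h1 h2, hgβ l hl r h1 h2]

theorem frechetDist_le_discreteFrechet_add_general
    {X : Type*} [MetricSpace X] (f g : I → X)
    (p q : ℕ) (s t : ℕ → I)
    (hs0 : s 0 = 0) (hsp : s p = 1) (hsmono : ∀ i < p, s i ≤ s (i + 1))
    (ht0 : t 0 = 0) (htq : t q = 1) (htmono : ∀ j < q, t j ≤ t (j + 1))
    (η : ℝ) (hη : 0 ≤ η)
    (hdevf : ∀ i < p, ∀ x : I, s i ≤ x → x ≤ s (i + 1) →
      dist (f x) (f (s i)) ≤ η ∧ dist (f x) (f (s (i + 1))) ≤ η)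
    (hdevg : ∀ j < q, ∀ x : I, t j ≤ x → x ≤ t (j + 1) →
      dist (g x) (g (t j)) ≤ η ∧ dist (g x) (g (t (j + 1))) ≤ η) :
    frechetDist f g ≤ discreteFrechet p q (fun i => f (s i)) (fun j => g (t j)) + 2 * η := by
  rw [← sub_le_iff_le_add, discreteFrechet, discreteFrechetWith]
  refine le_csInf ⟨_, p + q, _, _, isCoupling_staircase p q, rfl⟩ ?_
  rintro c ⟨m, a, b, hc, rfl⟩
  exact sub_le_iff_le_add.2 <| hc.frechetDist_le hs0 hsp hsmono ht0 htq htmono hη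
    (fun i hi x h1 h2 => (hdevf i hi x h1 h2).1) (fun j hj x h1 h2 => (hdevg j hj x h1 h2).1)

/-- for subdivisions of deviation at most `η`, the continuous Fréchet distance
is at most the discrete Fréchet distance of the vertex sequences plus `2η`. -/
theorem frechetDist_le_discreteFrechet_add
    {X : Type*} [MetricSpace X] (f g : I → X) (hf : Continuous f) (hg : Continuous g)
    (p q : ℕ) (s t : ℕ → I)
    (hs0 : s 0 = 0) (hsp : s p = 1) (hsmono : ∀ i < p, s i ≤ s (i + 1))
    (ht0 : t 0 = 0) (htq : t q = 1) (htmono : ∀ j < q, t j ≤ t (j + 1))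
    (η : ℝ) (hη : 0 ≤ η)
    (hdevf : ∀ i < p, ∀ x : I, s i ≤ x → x ≤ s (i + 1) →
      dist (f x) (f (s i)) ≤ η ∧ dist (f x) (f (s (i + 1))) ≤ η)
    (hdevg : ∀ j < q, ∀ x : I, t j ≤ x → x ≤ t (j + 1) →
      dist (g x) (g (t j)) ≤ η ∧ dist (g x) (g (t (j + 1))) ≤ η) :
    frechetDist f g ≤ discreteFrechet p q (fun i => f (s i)) (fun j => g (t j)) + 2 * η :=
  frechetDist_le_discreteFrechet_add_general f g p q s t hs0 hsp hsmono ht0 htq htmono η hη hdevf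
    hdevg
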